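/- Combining the Lipschitz bounds: if R is c-Lipschitz and particles are updated for L steps of SVGD with step size ε, Gaussian kernel bandwidth σ, and temperature α, then MMD²(π⁰_N, π^L_N) ≤ (2εL/(σ√e))·(c/α + 1/(σ√e)). -/

import Mathlib

open Real

/-!
Each SVGD velocity is an average of vectors of norm at most `c/α + 1/(σ√e)`: the kernel weight is
at most `1` and the gradient of the Gaussian kernel has norm `(t/σ²)·exp(-t²/(2σ²)) ≤ 1/(σ√e)`.
Hence after `L` steps every particle has moved by at most `εL(c/α + 1/(σ√e))`. The same gradient
bound makes the kernel `1/(σ√e)`-Lipschitz in its first argument, and each term of the `MMD²` double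
sum is a sum of two differences of kernel values at points displaced by one particle's motion.
-/

open Finset

lemma mul_exp_neg_sq_div_two_le (x : ℝ) : x * exp (-x ^ 2 / 2) ≤ exp (-1 / 2) := by
  have hx : x ≤ exp ((x ^ 2 - 1) / 2) := by
    refine le_of_sq_le_sq ?_ (exp_pos _).le
    rw [← exp_nat_mul, Nat.cast_ofNat, mul_div_cancel₀ _ two_ne_zero]
    linarith [add_one_le_exp (x ^ 2 - 1)]
  calc x * exp (-x ^ 2 / 2) ≤ exp ((x ^ 2 - 1) / 2) * exp (-x ^ 2 / 2) := by gcongr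
    _ = exp (-1 / 2) := by rw [← exp_add]; ring_nf

lemma div_sq_mul_exp_neg_sq_le {σ : ℝ} (hσ : 0 < σ) (t : ℝ) :
    t / σ ^ 2 * exp (-t ^ 2 / (2 * σ ^ 2)) ≤ 1 / (σ * √(exp 1)) := by
  calc t / σ ^ 2 * exp (-t ^ 2 / (2 * σ ^ 2)) = t / σ * exp (-(t / σ) ^ 2 / 2) / σ := by
        field_simp
    _ ≤ exp (-1 / 2) / σ := by gcongr; exact mul_exp_neg_sq_div_two_le _
    _ = 1 / (σ * √(exp 1)) := by rw [← exp_half, neg_div, exp_neg]; field_simp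

lemma inv_card_mul_sum_le {ι : Type*} {s : Finset ι} (hs : s.Nonempty) {f : ι → ℝ} {B : ℝ}
    (h : ∀ i ∈ s, f i ≤ B) : (#s : ℝ)⁻¹ * ∑ i ∈ s, f i ≤ B := by
  rw [inv_mul_le_iff₀ (by exact_mod_cast hs.card_pos)]
  simpa using s.sum_le_card_nsmul f B h

lemma norm_inv_card_smul_sum_le {ι F : Type*} [SeminormedAddCommGroup F] [NormedSpace ℝ F]
    {s : Finset ι} (hs : s.Nonempty) {f : ι → F} {B : ℝ} (h : ∀ i ∈ s, ‖f i‖ ≤ B) :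
    ‖(#s : ℝ)⁻¹ • ∑ i ∈ s, f i‖ ≤ B := by
  rw [norm_smul, norm_inv, Real.norm_natCast]
  exact (mul_le_mul_of_nonneg_left (norm_sum_le _ _) (by positivity)).trans
    (inv_card_mul_sum_le hs h)

lemma dist_le_mul_of_dist_succ_le {X : Type*} [PseudoMetricSpace X] {x : ℕ → X} {D : ℝ}
    (h : ∀ l, dist (x l) (x (l + 1)) ≤ D) (n : ℕ) : dist (x 0) (x n) ≤ n * D := by
  simpa using dist_le_range_sum_of_dist_le (d := fun _ => D) n fun {l} _ => h l

noncomputable def gaussianKernel {E : Type*} [SeminormedAddCommGroup E] (σ : ℝ) (u v : E) : ℝ :=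
  exp (-‖u - v‖ ^ 2 / (2 * σ ^ 2))

namespace gaussianKernel

section Seminormed

variable {E : Type*} [SeminormedAddCommGroup E]

lemma pos (σ : ℝ) (u v : E) : 0 < gaussianKernel σ u v := exp_pos _

lemma abs_le_one (σ : ℝ) (u v : E) : |gaussianKernel σ u v| ≤ 1 := by
  rw [abs_of_pos (pos σ u v)]
  exact exp_le_one_iff.2 (div_nonpos_of_nonpos_of_nonneg (by simp) (by positivity))

end Seminormed

variable {E : Type*} [NormedAddCommGroup E] [InnerProductSpace ℝ E]

lemma hasFDerivAt_left (σ : ℝ) (u v : E) :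
    HasFDerivAt (gaussianKernel σ · v) ((-gaussianKernel σ u v / σ ^ 2) • innerSL ℝ (u - v)) u := by
  have h := (((hasFDerivAt_id u).sub_const v).norm_sq.neg.mul_const (2 * σ ^ 2)⁻¹).exp
  simp only [gaussianKernel, div_eq_mul_inv]
  refine h.congr_fderiv ?_
  ext w
  simp only [id_eq, Pi.neg_apply, mul_inv_rev, neg_mul, map_sub, ContinuousLinearMap.comp_id,
    smul_neg, neg_apply, smul_apply, sub_apply, coe_innerSL_apply, nsmul_eq_mul, Nat.cast_ofNat,
    smul_eq_mul, neg_smul, neg_inj]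
  ring

lemma norm_fderiv_left_le {σ : ℝ} (hσ : 0 < σ) (u v : E) :
    ‖fderiv ℝ (gaussianKernel σ · v) u‖ ≤ 1 / (σ * √(exp 1)) := by
  rw [(hasFDerivAt_left σ u v).fderiv, norm_smul, innerSL_apply_norm, norm_div, norm_neg,
    norm_of_nonneg (pos σ u v).le, norm_of_nonneg (by positivity), div_mul_comm]
  exact div_sq_mul_exp_neg_sq_le hσ _

lemma abs_sub_left_le {σ : ℝ} (hσ : 0 < σ) (u u' v : E) :
    |gaussianKernel σ u v - gaussianKernel σ u' v| ≤ 1 / (σ * √(exp 1)) * dist u u' := by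
  rw [dist_eq_norm]
  exact convex_univ.norm_image_sub_le_of_norm_fderiv_le
    (fun w _ => (hasFDerivAt_left σ w v).differentiableAt)
    (fun w _ => norm_fderiv_left_le hσ w v) (Set.mem_univ u') (Set.mem_univ u)

lemma norm_gradient_left_le [CompleteSpace E] {σ : ℝ} (hσ : 0 < σ) (u v : E) :
    ‖gradient (gaussianKernel σ · v) u‖ ≤ 1 / (σ * √(exp 1)) := by
  rw [gradient, LinearIsometryEquiv.norm_map]
  exact norm_fderiv_left_le hσ u v

end gaussianKernel

/-- The SVGD velocity field `φ` generated by the particles `x` for the target `exp (R / α)`. -/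
noncomputable def svgdVelocity {E : Type*} [NormedAddCommGroup E] [InnerProductSpace ℝ E]
    [CompleteSpace E] {N : ℕ} (k : E → E → ℝ) (R : E → ℝ) (α : ℝ) (x : Fin N → E) (u : E) : E :=
  (N : ℝ)⁻¹ • ∑ j, ((k (x j) u / α) • gradient R (x j) + gradient (fun v => k v u) (x j))

lemma norm_svgdVelocity_le {E : Type*} [NormedAddCommGroup E] [InnerProductSpace ℝ E]
    [CompleteSpace E] {N : ℕ} (hN : 0 < N) {k : E → E → ℝ} {R : E → ℝ} {α c K : ℝ}
    (hα : 0 < α) (hk : ∀ u v, |k u v| ≤ 1) (hkgrad : ∀ u v, ‖gradient (k · v) u‖ ≤ K)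
    (hR : ∀ u, ‖gradient R u‖ ≤ c) (x : Fin N → E) (u : E) :
    ‖svgdVelocity k R α x u‖ ≤ c / α + K := by
  have hterm (j : Fin N) : ‖(k (x j) u / α) • gradient R (x j)‖ ≤ c / α := by
    rw [norm_smul, norm_div, norm_of_nonneg hα.le, div_mul_eq_mul_div]
    gcongr
    simpa using mul_le_mul (hk (x j) u) (hR (x j)) (norm_nonneg _) zero_le_one
  have h := norm_inv_card_smul_sum_le (univ_nonempty_iff.2 ⟨⟨0, hN⟩⟩)
    fun j _ => (norm_add_le _ _).trans (add_le_add (hterm j) (hkgrad (x j) u))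
  rwa [card_fin] at h

/-- The squared maximum mean discrepancy, for the kernel `k`, between the empirical measures of
the particle systems `x` and `y`. -/
noncomputable def mmdSq {X : Type*} {N : ℕ} (k : X → X → ℝ) (x y : Fin N → X) : ℝ :=
  (1 / (N : ℝ) ^ 2) * ∑ i, ∑ j, (k (x i) (x j) + k (y i) (y j) - k (y i) (x j) - k (x i) (y j))

section MMD

variable {X : Type*} [PseudoMetricSpace X] {k : X → X → ℝ} {K : ℝ}

lemma kernel_add_sub_sub_le (hk : ∀ u u' v, |k u v - k u' v| ≤ K * dist u u') (x y x' y' : X) :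
    k x x' + k y y' - k y x' - k x y' ≤ 2 * K * dist x y := by
  have h₁ := (le_abs_self _).trans (hk x y x')
  have h₂ := (le_abs_self _).trans (hk y x y')
  rw [dist_comm] at h₂
  linarith

lemma mmdSq_le {N : ℕ} (hN : 0 < N) (hK : 0 ≤ K) (hk : ∀ u u' v, |k u v - k u' v| ≤ K * dist u u')
    {x y : Fin N → X} {D : ℝ} (hxy : ∀ i, dist (x i) (y i) ≤ D) : mmdSq k x y ≤ 2 * K * D := by
  have hne : (univ : Finset (Fin N)).Nonempty := univ_nonempty_iff.2 ⟨⟨0, hN⟩⟩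
  have hcard : (#(univ : Finset (Fin N)) : ℝ) = N := by simp
  rw [mmdSq, one_div, sq, mul_inv, mul_assoc, mul_sum, ← hcard]
  exact inv_card_mul_sum_le hne fun i _ => inv_card_mul_sum_le hne fun j _ =>
    (kernel_add_sub_sub_le hk _ _ _ _).trans (by gcongr; exact hxy i)

end MMD

theorem vgf_mmd_bound_general (d N : ℕ) (hN : 0 < N) (σ α ε c : ℝ)
    (hσ : 0 < σ) (hα : 0 < α) (hε : 0 < ε)
    (k : EuclideanSpace ℝ (Fin d) → EuclideanSpace ℝ (Fin d) → ℝ)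
    (hk : ∀ u v, k u v = Real.exp (-‖u - v‖ ^ 2 / (2 * σ ^ 2)))
    (R : EuclideanSpace ℝ (Fin d) → ℝ)
    (hRc : ∀ a, ‖gradient R a‖ ≤ c)
    (a : ℕ → Fin N → EuclideanSpace ℝ (Fin d))
    (hstep : ∀ l i, a (l + 1) i = a l i +
      ε • ((N : ℝ)⁻¹ • ∑ j, ((k (a l j) (a l i) / α) • gradient R (a l j)
        + gradient (fun u => k u (a l i)) (a l j))))
    (L : ℕ) :
    (1 / (N : ℝ) ^ 2) *
        ∑ i, ∑ j, (k (a 0 i) (a 0 j) + k (a L i) (a L j)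
          - k (a L i) (a 0 j) - k (a 0 i) (a L j))
      ≤ (2 * ε * L / (σ * Real.sqrt (Real.exp 1)))
          * (c / α + 1 / (σ * Real.sqrt (Real.exp 1))) := by
  obtain rfl : k = gaussianKernel σ := funext₂ hk
  have hvel (l : ℕ) (i : Fin N) :
      dist (a l i) (a (l + 1) i) ≤ ε * (c / α + 1 / (σ * √(exp 1))) := by
    rw [dist_comm, dist_eq_norm, hstep, add_sub_cancel_left, norm_smul, norm_of_nonneg hε.le]
    gcongr
    exact norm_svgdVelocity_le hN hα (gaussianKernel.abs_le_one σ)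
      (gaussianKernel.norm_gradient_left_le hσ) hRc (a l) (a l i)
  calc mmdSq (gaussianKernel σ) (a 0) (a L)
      ≤ 2 * (1 / (σ * √(exp 1))) * (L * (ε * (c / α + 1 / (σ * √(exp 1))))) :=
        mmdSq_le hN (by positivity) (gaussianKernel.abs_sub_left_le hσ)
          fun i => dist_le_mul_of_dist_succ_le (x := (a · i)) (hvel · i) L
    _ = _ := by ring

/-- Theorem 1 of the VGF paper: if `R` is `c`-Lipschitz (so `‖∇R‖ ≤ c`) and particles are
updated for `L` steps of SVGD with step size `ε`, Gaussian kernel bandwidth `σ`, and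
temperature `α`, then `MMD²(π⁰_N, π^L_N) ≤ (2εL/(σ√e))·(c/α + 1/(σ√e))`. -/
theorem vgf_mmd_bound (d N : ℕ) (hN : 0 < N) (σ α ε c : ℝ)
    (hσ : 0 < σ) (hα : 0 < α) (hε : 0 < ε) (hc : 0 ≤ c)
    (k : EuclideanSpace ℝ (Fin d) → EuclideanSpace ℝ (Fin d) → ℝ)
    (hk : ∀ u v, k u v = Real.exp (-‖u - v‖ ^ 2 / (2 * σ ^ 2)))
    (R : EuclideanSpace ℝ (Fin d) → ℝ) (hR : Differentiable ℝ R)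
    (hRc : ∀ a, ‖gradient R a‖ ≤ c)
    (a : ℕ → Fin N → EuclideanSpace ℝ (Fin d))
    (hstep : ∀ l i, a (l + 1) i = a l i +
      ε • ((N : ℝ)⁻¹ • ∑ j, ((k (a l j) (a l i) / α) • gradient R (a l j)
        + gradient (fun u => k u (a l i)) (a l j))))
    (L : ℕ) :
    (1 / (N : ℝ) ^ 2) *
        ∑ i, ∑ j, (k (a 0 i) (a 0 j) + k (a L i) (a L j)
          - k (a L i) (a 0 j) - k (a 0 i) (a L j))
      ≤ (2 * ε * L / (σ * Real.sqrt (Real.exp 1)))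
          * (c / α + 1 / (σ * Real.sqrt (Real.exp 1))) :=
  vgf_mmd_bound_general d N hN σ α ε c hσ hα hε k hk R hRc a hstep L
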